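/- arXiv:2308.11058 — 7 statements merged into one kernel-verified Lean document; each statement's English description precedes it below -/
import Mathlib

section
/- Let H be a real inner product space, c > 0, and φ : H → ℝ be both c-semiconvex and c-semiconcave. Then for all x, y, z ∈ H, |φ(x + y + z) - φ(x + y) - φ(x + z) + φ(x)| ≤ (c/2)(‖y‖² + ‖z‖²). -/
set_option maxHeartbeats 800000


theorem second_difference_bound_weak {H : Type*} [NormedAddCommGroup H]
    [InnerProductSpace ℝ H] (φ : H → ℝ) (c : ℝ) (hc : 0 < c)
    (hscv : ConvexOn ℝ Set.univ (fun w => φ w + c / 2 * ‖w‖ ^ 2))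
    (hscc : ConcaveOn ℝ Set.univ (fun w => φ w - c / 2 * ‖w‖ ^ 2)) :
    ∀ x y z : H,
      |φ (x + y + z) - φ (x + y) - φ (x + z) + φ x| ≤
        c / 2 * (‖y‖ ^ 2 + ‖z‖ ^ 2) := by
  intro x y z
  have h2 : (1/2:ℝ) + 1/2 = 1 := by norm_num
  have ha : (0:ℝ) ≤ 1/2 := by norm_num
  have key : ∀ a b : H, ‖a‖^2 + ‖b‖^2 =
      2*‖(1/2:ℝ)•a + (1/2:ℝ)•b‖^2 + (1/2)*‖a-b‖^2 := by
    intro a b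
    have hp := parallelogram_law_with_norm ℝ ((1/2:ℝ)•a + (1/2:ℝ)•b)
      ((1/2:ℝ)•a - (1/2:ℝ)•b)
    have e1 : (1/2:ℝ)•a + (1/2:ℝ)•b + ((1/2:ℝ)•a - (1/2:ℝ)•b) = a := by module
    have e2 : (1/2:ℝ)•a + (1/2:ℝ)•b - ((1/2:ℝ)•a - (1/2:ℝ)•b) = b := by module
    have e3 : (1/2:ℝ)•a - (1/2:ℝ)•b = (1/2:ℝ)•(a-b) := by module
    rw [e1, e2, e3, norm_smul] at hp
    have e4 : ‖(1/2:ℝ)‖ = 1/2 := by norm_num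
    rw [e4] at hp
    linear_combination hp
  have c1 := hscv.2 (Set.mem_univ (x+y)) (Set.mem_univ (x+z)) ha ha h2
  have c2 := hscv.2 (Set.mem_univ x) (Set.mem_univ (x+y+z)) ha ha h2
  have k1 := hscc.2 (Set.mem_univ (x+y)) (Set.mem_univ (x+z)) ha ha h2
  have k2 := hscc.2 (Set.mem_univ x) (Set.mem_univ (x+y+z)) ha ha h2
  simp only [smul_eq_mul] at c1 c2 k1 k2
  have hm : (1/2:ℝ)•(x+y) + (1/2:ℝ)•(x+z) = (1/2:ℝ)•x + (1/2:ℝ)•(x+y+z) := by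
    module
  rw [hm] at c1 k1
  have n1 := key (x+y) (x+z)
  have n2 := key x (x+y+z)
  have e1 : x+y-(x+z) = y - z := by abel
  have e2 : x - (x+y+z) = -(y+z) := by abel
  rw [e1] at n1
  rw [e2, norm_neg] at n2
  have hp := parallelogram_law_with_norm ℝ y z
  rw [hm] at n1
  rw [abs_le]
  constructor <;> nlinarith [c1, c2, k1, k2, n1, n2, hp]
end

section
/- Let H be a real inner product space, c > 0, and φ : H → ℝ be both c-semiconvex and c-semiconcave. Then for all x, y, z ∈ H, |φ(x + y + z) - φ(x + y) - φ(x + z) + φ(x)| ≤ c‖y‖‖z‖. -/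
open scoped RealInnerProductSpace

section
variable {H : Type*} [NormedAddCommGroup H] [InnerProductSpace ℝ H]

lemma sdb_norm_expand (x y z : H) (s t : ℝ) :
    ‖x + s•y + t•z‖^2 = ‖x‖^2 + s^2*‖y‖^2 + t^2*‖z‖^2
      + 2*s*⟪x,y⟫ + 2*t*⟪x,z⟫ + 2*s*t*⟪y,z⟫ := by
  simp only [← real_inner_self_eq_norm_sq, inner_add_left, inner_add_right,
    real_inner_smul_left, real_inner_smul_right, real_inner_comm y x,
    real_inner_comm z x, real_inner_comm z y]
  ring

lemma sdb_base (φ : H → ℝ) (c : ℝ)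
    (hscv : ConvexOn ℝ Set.univ (fun w => φ w + c / 2 * ‖w‖ ^ 2))
    (hscc : ConcaveOn ℝ Set.univ (fun w => φ w - c / 2 * ‖w‖ ^ 2))
    (x y z : H) :
    |φ (x + y + z) - φ (x + y) - φ (x + z) + φ x| ≤ c/2 * (‖y‖^2 + ‖z‖^2) := by
  have hm1 : (1/2:ℝ) • (x+y+z) + (1/2:ℝ) • x = x + (1/2:ℝ)•y + (1/2:ℝ)•z := by module
  have hm2 : (1/2:ℝ) • (x+y) + (1/2:ℝ) • (x+z) = x + (1/2:ℝ)•y + (1/2:ℝ)•z := by module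
  have h2 : (0:ℝ) ≤ 1/2 := by norm_num
  have hs : (1/2:ℝ) + 1/2 = 1 := by norm_num
  have hcv1 := hscv.2 (Set.mem_univ (x+y+z)) (Set.mem_univ x) h2 h2 hs
  have hcc1 := hscc.2 (Set.mem_univ (x+y)) (Set.mem_univ (x+z)) h2 h2 hs
  have hcv2 := hscv.2 (Set.mem_univ (x+y)) (Set.mem_univ (x+z)) h2 h2 hs
  have hcc2 := hscc.2 (Set.mem_univ (x+y+z)) (Set.mem_univ x) h2 h2 hs
  rw [hm1] at hcv1 hcc2
  rw [hm2] at hcc1 hcv2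
  simp only [smul_eq_mul] at hcv1 hcc1 hcv2 hcc2
  have n0 : ‖x+y+z‖^2 = ‖x‖^2 + ‖y‖^2 + ‖z‖^2 + 2*⟪x,y⟫ + 2*⟪x,z⟫ + 2*⟪y,z⟫ := by
    have := sdb_norm_expand x y z 1 1; simpa using this
  have n1 : ‖x+y‖^2 = ‖x‖^2 + ‖y‖^2 + 2*⟪x,y⟫ := by
    have := sdb_norm_expand x y z 1 0; simpa using this
  have n2 : ‖x+z‖^2 = ‖x‖^2 + ‖z‖^2 + 2*⟪x,z⟫ := by
    have := sdb_norm_expand x y z 0 1; simpa using this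
  have nm : ‖x + (1/2:ℝ)•y + (1/2:ℝ)•z‖^2 = ‖x‖^2 + (1/4)*‖y‖^2 + (1/4)*‖z‖^2
      + ⟪x,y⟫ + ⟪x,z⟫ + (1/2)*⟪y,z⟫ := by
    have := sdb_norm_expand x y z (1/2) (1/2); rw [this]; ring
  simp only [n0, n1, n2, nm] at hcv1 hcc1 hcv2 hcc2
  rw [abs_le]
  constructor <;> linarith [hcv1, hcc1, hcv2, hcc2]

lemma sdb_tele (φ : H → ℝ) (u z : H) (K : ℝ)
    (h : ∀ x : H, |φ (x + u + z) - φ (x + u) - φ (x + z) + φ x| ≤ K) :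
    ∀ (n : ℕ) (x : H), |φ (x + n • u + z) - φ (x + n • u) - φ (x + z) + φ x| ≤ n * K := by
  intro n
  induction n with
  | zero => intro x; simp
  | succ n ih =>
    intro x
    have h1 := ih x
    have h2 := h (x + n • u)
    have e1 : x + (n+1) • u + z = x + n • u + u + z := by rw [succ_nsmul]; abel
    have e2 : x + (n+1) • u = x + n • u + u := by rw [succ_nsmul]; abel
    have key : φ (x + (n+1) • u + z) - φ (x + (n+1) • u) - φ (x + z) + φ x
        = (φ (x + n • u + z) - φ (x + n • u) - φ (x + z) + φ x)
          + (φ (x + n • u + u + z) - φ (x + n • u + u) - φ (x + n • u + z) + φ (x + n • u)) := by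
      rw [e1, e2]; ring
    rw [key]
    calc |_ + _| ≤ _ := abs_add_le _ _
      _ ≤ n * K + K := add_le_add h1 h2
      _ = (n + 1 : ℕ) * K := by push_cast; ring

lemma sdb_symm (φ : H → ℝ) (x y z : H) :
    φ (x + y + z) - φ (x + y) - φ (x + z) + φ x
      = φ (x + z + y) - φ (x + z) - φ (x + y) + φ x := by
  rw [show x + y + z = x + z + y from by abel]; ring

lemma sdb_grid (φ : H → ℝ) (c : ℝ)
    (hscv : ConvexOn ℝ Set.univ (fun w => φ w + c / 2 * ‖w‖ ^ 2))
    (hscc : ConcaveOn ℝ Set.univ (fun w => φ w - c / 2 * ‖w‖ ^ 2))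
    (n m : ℕ) (hn : 0 < n) (hm : 0 < m) (x y z : H) :
    |φ (x + y + z) - φ (x + y) - φ (x + z) + φ x|
      ≤ c/2 * ((m:ℝ)/n * ‖y‖^2 + (n:ℝ)/m * ‖z‖^2) := by
  set u := ((n:ℝ))⁻¹ • y with hu
  set v := ((m:ℝ))⁻¹ • z with hv
  have hn0 : ((n:ℝ)) ≠ 0 := by positivity
  have hm0 : ((m:ℝ)) ≠ 0 := by positivity
  have hyu : n • u = y := by
    rw [hu, ← Nat.cast_smul_eq_nsmul ℝ, smul_smul, mul_inv_cancel₀ hn0, one_smul]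
  have hzv : m • v = z := by
    rw [hv, ← Nat.cast_smul_eq_nsmul ℝ, smul_smul, mul_inv_cancel₀ hm0, one_smul]
  -- step 1: telescope in the v direction
  have h1 : ∀ x : H, |φ (x + v + u) - φ (x + v) - φ (x + u) + φ x|
      ≤ c/2 * (‖v‖^2 + ‖u‖^2) := fun x => sdb_base φ c hscv hscc x v u
  have h2 := sdb_tele φ v u _ h1 m
  -- step 2: swap and telescope in the u direction
  have h3 : ∀ x : H, |φ (x + u + z) - φ (x + u) - φ (x + z) + φ x|
      ≤ m * (c/2 * (‖v‖^2 + ‖u‖^2)) := by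
    intro x
    rw [sdb_symm]
    rw [← hzv]
    exact h2 x
  have h4 := sdb_tele φ u z _ h3 n x
  rw [hyu] at h4
  have hnu : ‖u‖ = ‖y‖ / n := by
    rw [hu, norm_smul]
    simp [abs_of_nonneg, div_eq_inv_mul]
  have hnv : ‖v‖ = ‖z‖ / m := by
    rw [hv, norm_smul]
    simp [abs_of_nonneg, div_eq_inv_mul]
  rw [hnu, hnv] at h4
  calc |φ (x + y + z) - φ (x + y) - φ (x + z) + φ x|
      ≤ n * (m * (c/2 * ((‖z‖/m)^2 + (‖y‖/n)^2))) := h4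
    _ = c/2 * ((m:ℝ)/n * ‖y‖^2 + (n:ℝ)/m * ‖z‖^2) := by field_simp; ring

end

theorem second_difference_bound {H : Type*} [NormedAddCommGroup H]
    [InnerProductSpace ℝ H] (φ : H → ℝ) (c : ℝ) (hc : 0 < c)
    (hscv : ConvexOn ℝ Set.univ (fun w => φ w + c / 2 * ‖w‖ ^ 2))
    (hscc : ConcaveOn ℝ Set.univ (fun w => φ w - c / 2 * ‖w‖ ^ 2)) :
    ∀ x y z : H,
      |φ (x + y + z) - φ (x + y) - φ (x + z) + φ x| ≤ c * ‖y‖ * ‖z‖ := by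
  intro x y z
  rcases eq_or_ne y 0 with hy | hy
  · subst hy; simp
  rcases eq_or_ne z 0 with hz | hz
  · subst hz; simp
  set a := ‖y‖ with ha
  set b := ‖z‖ with hb
  have hapos : 0 < a := norm_pos_iff.mpr hy
  have hbpos : 0 < b := norm_pos_iff.mpr hz
  by_contra hcon
  push_neg at hcon
  set D := |φ (x + y + z) - φ (x + y) - φ (x + z) + φ x| with hD
  set ε := D - c * a * b with hε
  have hεpos : 0 < ε := by simp only [hε]; linarith
  obtain ⟨m₀, hm₀⟩ := exists_nat_gt (c * b^2 / (2 * ε))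
  set m := m₀ + 1 with hmdef
  have hmpos : 0 < m := Nat.succ_pos _
  have hmR : (c * b^2) / (2 * ε) < (m:ℝ) := by
    have : (m₀ : ℝ) ≤ (m : ℝ) := by exact_mod_cast Nat.le_succ m₀
    linarith
  have hmRpos : (0:ℝ) < m := by exact_mod_cast hmpos
  set t := a / b with ht
  have htpos : 0 < t := div_pos hapos hbpos
  set n := ⌈(m:ℝ) * t⌉₊ with hn
  have hnpos : 0 < n := by
    rw [hn]
    exact Nat.ceil_pos.mpr (mul_pos hmRpos htpos)
  have hnRpos : (0:ℝ) < n := by exact_mod_cast hnpos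
  have hlb : (m:ℝ) * t ≤ n := Nat.le_ceil _
  have hub : (n:ℝ) ≤ (m:ℝ) * t + 1 := le_of_lt (Nat.ceil_lt_add_one (by positivity))
  have hgrid := sdb_grid φ c hscv hscc n m hnpos hmpos x y z
  rw [← hD, ← ha, ← hb] at hgrid
  -- m*a ≤ n*b and n*b ≤ m*a + b
  have hlb' : (m:ℝ) * a ≤ (n:ℝ) * b := by
    have := mul_le_mul_of_nonneg_right hlb (le_of_lt hbpos)
    rw [ht] at this
    field_simp at this
    linarith [this]
  have hub' : (n:ℝ) * b ≤ (m:ℝ) * a + b := by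
    have := mul_le_mul_of_nonneg_right hub (le_of_lt hbpos)
    rw [ht] at this
    field_simp at this
    linarith [this]
  have k1 : (m:ℝ)/n * a^2 ≤ a * b := by
    rw [div_mul_eq_mul_div, div_le_iff₀ hnRpos]
    nlinarith
  have k2 : (n:ℝ)/m * b^2 ≤ a * b + b^2 / m := by
    rw [div_mul_eq_mul_div, div_le_iff₀ hmRpos, add_mul, div_mul_cancel₀ _ (ne_of_gt hmRpos)]
    nlinarith
  have k3 : c/2 * (b^2 / m) < ε := by
    have h := (div_lt_iff₀ (by positivity : (0:ℝ) < 2 * ε)).mp hmR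
    rw [show c/2 * (b^2/(m:ℝ)) = (c * b^2)/(2 * m) from by ring,
      div_lt_iff₀ (by positivity : (0:ℝ) < 2 * (m:ℝ))]
    nlinarith
  have : D ≤ c * a * b + c/2 * (b^2/m) := by
    calc D ≤ c/2 * ((m:ℝ)/n * a^2 + (n:ℝ)/m * b^2) := hgrid
      _ ≤ c/2 * (a*b + (a*b + b^2/m)) := by
          apply mul_le_mul_of_nonneg_left (add_le_add k1 k2) (by positivity)
      _ = c * a * b + c/2 * (b^2/m) := by ring
  linarith [hεpos, k3, this, hε]
end

section
/- Let H be a real inner product space, c > 0, and φ : H → ℝ a function which at every point x admits a vector ∇φ(x) ∈ H with |φ(x') - φ(x) - ⟨x' - x, ∇φ(x)⟩| ≤ (c/2)‖x' - x‖² for all x' ∈ H. Then the gradient map is c-Lipschitz: ‖∇φ(x') - ∇φ(x)‖ ≤ c‖x' - x‖ for all x, x' ∈ H. -/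
open RealInnerProductSpace

/-- Key estimate for a convex function (with subgradient `G`) that is `L`-smooth:
`‖G y - G x‖² ≤ 2L (ψ y - ψ x - ⟪y - x, G x⟫)`. -/
lemma smooth_convex_key {H : Type*} [NormedAddCommGroup H]
    [InnerProductSpace ℝ H] (ψ : H → ℝ) (G : H → H) (L : ℝ) (hL : 0 < L)
    (hlow : ∀ a b : H, ψ a + ⟪b - a, G a⟫ ≤ ψ b)
    (hup : ∀ a b : H, ψ b ≤ ψ a + ⟪b - a, G a⟫ + L / 2 * ‖b - a‖ ^ 2) :
    ∀ x y : H, ‖G y - G x‖ ^ 2 ≤ 2 * L * (ψ y - ψ x - ⟪y - x, G x⟫) := by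
  intro x y
  set Δ := G y - G x with hΔ
  set z := y - (1 / L) • Δ with hz
  have h1 := hup y z
  have h2 := hlow x z
  have ezy : z - y = -((1 / L) • Δ) := by rw [hz]; abel
  have ezx : z - x = (y - x) - (1 / L) • Δ := by rw [hz]; abel
  have i1 : ⟪z - y, G y⟫ = -(1 / L * ⟪Δ, G y⟫) := by
    rw [ezy, inner_neg_left, real_inner_smul_left]
  have i2 : ⟪z - x, G x⟫ = ⟪y - x, G x⟫ - 1 / L * ⟪Δ, G x⟫ := by
    rw [ezx, inner_sub_left, real_inner_smul_left]
  have n1 : ‖z - y‖ ^ 2 = (1 / L) ^ 2 * ‖Δ‖ ^ 2 := by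
    rw [ezy, norm_neg, norm_smul, mul_pow]
    congr 1
    rw [Real.norm_eq_abs, sq_abs]
  have idiff : ⟪Δ, G y⟫ - ⟪Δ, G x⟫ = ‖Δ‖ ^ 2 := by
    rw [← inner_sub_right, ← hΔ, real_inner_self_eq_norm_sq]
  rw [i1] at h1
  rw [i2] at h2
  rw [n1] at h1
  have hL' : L ≠ 0 := ne_of_gt hL
  have e3 : 1 / L * ⟪Δ, G y⟫ - 1 / L * ⟪Δ, G x⟫ = 1 / L * ‖Δ‖ ^ 2 := by
    rw [← mul_sub, idiff]
  have e4 : L / 2 * ((1 / L) ^ 2 * ‖Δ‖ ^ 2) = 1 / (2 * L) * ‖Δ‖ ^ 2 := by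
    field_simp
  have h6 : 1 / L * ‖Δ‖ ^ 2 - 1 / (2 * L) * ‖Δ‖ ^ 2 ≤ ψ y - ψ x - ⟪y - x, G x⟫ := by
    linarith [h1, h2, e3, e4]
  calc ‖Δ‖ ^ 2 = 2 * L * (1 / L * ‖Δ‖ ^ 2 - 1 / (2 * L) * ‖Δ‖ ^ 2) := by
        field_simp; ring
    _ ≤ 2 * L * (ψ y - ψ x - ⟪y - x, G x⟫) := by
        apply mul_le_mul_of_nonneg_left h6 (by linarith)

theorem gradient_lipschitz {H : Type*} [NormedAddCommGroup H]
    [InnerProductSpace ℝ H] (φ : H → ℝ) (c : ℝ) (hc : 0 < c)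
    (gradφ : H → H)
    (h : ∀ x x' : H, |φ x' - φ x - ⟪x' - x, gradφ x⟫| ≤ c / 2 * ‖x' - x‖ ^ 2) :
    ∀ x x' : H, ‖gradφ x' - gradφ x‖ ≤ c * ‖x' - x‖ := by
  have hlow : ∀ a b : H, - (c / 2 * ‖b - a‖ ^ 2) ≤ φ b - φ a - ⟪b - a, gradφ a⟫ :=
    fun a b => neg_le_of_abs_le (h a b)
  have hup : ∀ a b : H, φ b - φ a - ⟪b - a, gradφ a⟫ ≤ c / 2 * ‖b - a‖ ^ 2 :=
    fun a b => le_of_abs_le (h a b)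
  have sqid : ∀ a b : H, c / 2 * ‖b‖ ^ 2 - c / 2 * ‖a‖ ^ 2 - c * ⟪b - a, a⟫
      = c / 2 * ‖b - a‖ ^ 2 := by
    intro a b
    rw [norm_sub_sq_real, inner_sub_left, real_inner_self_eq_norm_sq]
    ring
  -- ψ₁ = φ + c/2‖·‖² is convex with subgradient gradφ + c·id, and 2c-smooth
  have key1 := smooth_convex_key (fun z => φ z + c / 2 * ‖z‖ ^ 2)
      (fun z => gradφ z + c • z) (2 * c) (by linarith)
      (by
        intro a b
        have e : ⟪b - a, gradφ a + c • a⟫ = ⟪b - a, gradφ a⟫ + c * ⟪b - a, a⟫ := by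
          rw [inner_add_right, real_inner_smul_right]
        have h1 := hlow a b
        have h2 := sqid a b
        linarith [h1, h2, e.le, e.ge])
      (by
        intro a b
        have e : ⟪b - a, gradφ a + c • a⟫ = ⟪b - a, gradφ a⟫ + c * ⟪b - a, a⟫ := by
          rw [inner_add_right, real_inner_smul_right]
        have h1 := hup a b
        have h2 := sqid a b
        have e2 : (2 * c) / 2 * ‖b - a‖ ^ 2 = c / 2 * ‖b - a‖ ^ 2 + c / 2 * ‖b - a‖ ^ 2 := by
          ring
        linarith [h1, h2, e.le, e.ge])
  -- ψ₂ = c/2‖·‖² - φ is convex with subgradient c·id - gradφ, and 2c-smooth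
  have key2 := smooth_convex_key (fun z => c / 2 * ‖z‖ ^ 2 - φ z)
      (fun z => c • z - gradφ z) (2 * c) (by linarith)
      (by
        intro a b
        have e : ⟪b - a, c • a - gradφ a⟫ = c * ⟪b - a, a⟫ - ⟪b - a, gradφ a⟫ := by
          rw [inner_sub_right, real_inner_smul_right]
        have h1 := hup a b
        have h2 := sqid a b
        linarith [h1, h2, e.le, e.ge])
      (by
        intro a b
        have e : ⟪b - a, c • a - gradφ a⟫ = c * ⟪b - a, a⟫ - ⟪b - a, gradφ a⟫ := by
          rw [inner_sub_right, real_inner_smul_right]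
        have h1 := hlow a b
        have h2 := sqid a b
        linarith [h1, h2, e.le, e.ge])
  intro x x'
  have k1a := key1 x x'
  have k1b := key1 x' x
  have k2a := key2 x x'
  have k2b := key2 x' x
  -- abbreviations
  set Δ : H := gradφ x' - gradφ x with hΔ
  set u : H := x' - x with hu
  have eV1 : (gradφ x' + c • x') - (gradφ x + c • x) = Δ + c • u := by
    rw [hΔ, hu, smul_sub]; abel
  have eV2 : (c • x' - gradφ x') - (c • x - gradφ x) = c • u - Δ := by
    rw [hΔ, hu, smul_sub]; abel
  have eo : x - x' = -u := by rw [hu]; abel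
  -- cocoercivity for ψ₁
  have co1 : ‖Δ + c • u‖ ^ 2 ≤ 2 * c * ⟪u, Δ + c • u⟫ := by
    rw [eV1] at k1a
    rw [norm_sub_rev (gradφ x + c • x) _, eV1, eo, inner_neg_left] at k1b
    have J : c * ⟪u, gradφ x' + c • x'⟫ - c * ⟪u, gradφ x + c • x⟫
        = c * ⟪u, Δ + c • u⟫ := by
      rw [← mul_sub, ← inner_sub_right, eV1]
    linarith [k1a, k1b, J.le, J.ge]
  -- cocoercivity for ψ₂
  have co2 : ‖c • u - Δ‖ ^ 2 ≤ 2 * c * ⟪u, c • u - Δ⟫ := by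
    rw [eV2] at k2a
    rw [norm_sub_rev (c • x - gradφ x) _, eV2, eo, inner_neg_left] at k2b
    have J : c * ⟪u, c • x' - gradφ x'⟫ - c * ⟪u, c • x - gradφ x⟫
        = c * ⟪u, c • u - Δ⟫ := by
      rw [← mul_sub, ← inner_sub_right, eV2]
    linarith [k2a, k2b, J.le, J.ge]
  -- parallelogram identity
  have par : ‖Δ + c • u‖ ^ 2 + ‖c • u - Δ‖ ^ 2 = 2 * ‖Δ‖ ^ 2 + 2 * (c ^ 2 * ‖u‖ ^ 2) := by
    have pa : ‖Δ + c • u‖ ^ 2 = ‖Δ‖ ^ 2 + 2 * ⟪Δ, c • u⟫ + ‖c • u‖ ^ 2 :=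
      norm_add_sq_real Δ (c • u)
    have pb : ‖c • u - Δ‖ ^ 2 = ‖c • u‖ ^ 2 - 2 * ⟪c • u, Δ⟫ + ‖Δ‖ ^ 2 :=
      norm_sub_sq_real (c • u) Δ
    have pc : ‖c • u‖ ^ 2 = c ^ 2 * ‖u‖ ^ 2 := by
      rw [norm_smul, Real.norm_eq_abs, abs_of_pos hc, mul_pow]
    have pd : ⟪Δ, c • u⟫ = ⟪c • u, Δ⟫ := real_inner_comm _ _
    linarith
  -- sum of the inner products
  have sumco : 2 * c * ⟪u, Δ + c • u⟫ + 2 * c * ⟪u, c • u - Δ⟫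
      = 4 * (c ^ 2 * ‖u‖ ^ 2) := by
    rw [← mul_add, ← inner_add_right]
    have e : (Δ + c • u) + (c • u - Δ) = (2 * c) • u := by
      rw [two_mul, add_smul]; abel
    rw [e, real_inner_smul_right, real_inner_self_eq_norm_sq]
    ring
  have hsq : ‖Δ‖ ^ 2 ≤ (c * ‖u‖) ^ 2 := by
    have e : (c * ‖u‖) ^ 2 = c ^ 2 * ‖u‖ ^ 2 := by ring
    linarith [co1, co2, par, sumco, e.le, e.ge]
  have h1 : (0:ℝ) ≤ ‖Δ‖ := norm_nonneg _
  have h2 : (0:ℝ) ≤ c * ‖u‖ := by positivity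
  nlinarith [hsq, h1, h2]
end

section
/- Let H be a real inner product space, φ : H → ℝ bounded below on a nonempty set C ⊆ H, and t, u > 0 with t < u. Suppose φ is (1/u)-semiconvex. Then the inf-convolution ψ(x) = inf_{z ∈ C} [φ(z) + (1/(2t))‖x - z‖²], assumed finite and with the infimum restricted to a convex set C, is (1/(u-t))-semiconvex. -/
/-! Completing the square gives
`φ z + ‖x - z‖² / (2t) + ‖x‖² / (2(u - t)) = (φ z + ‖z‖² / (2u)) + (u - t) / (2tu) · ‖z - u / (u - t) • x‖²`,
a jointly convex function of `(x, z)` by the semiconvexity of `φ`. Minimising a jointly convex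
function over `z` in a convex set leaves a convex function of `x`, and that function is
`ψ x + ‖x‖² / (2(u - t))`. -/

open Set

theorem convexOn_univ_norm_sq {E : Type*} [SeminormedAddCommGroup E] [NormedSpace ℝ E] :
    ConvexOn ℝ univ fun x : E => ‖x‖ ^ 2 :=
  convexOn_univ_norm.pow (fun _ _ => norm_nonneg _) 2

theorem ConvexOn.of_isGLB_image {E F : Type*} [AddCommGroup E] [Module ℝ E] [AddCommGroup F]
    [Module ℝ F] {s : Set E} {C : Set F} {f : E × F → ℝ} {g : E → ℝ}
    (hf : ConvexOn ℝ (s ×ˢ C) f) (hg : ∀ x ∈ s, IsGLB ((fun z => f (x, z)) '' C) (g x)) :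
    ConvexOn ℝ s g := by
  have near : ∀ x ∈ s, ∀ ε > 0, ∃ z ∈ C, f (x, z) < g x + ε := fun x hx ε hε => by
    obtain ⟨_, ⟨z, hz, rfl⟩, -, hlt⟩ := (hg x hx).exists_between (lt_add_of_pos_right _ hε)
    exact ⟨z, hz, hlt⟩
  refine ⟨fun x₀ hx₀ x₁ hx₁ a b ha hb hab => ?_, fun x₀ hx₀ x₁ hx₁ a b ha hb hab => ?_⟩
  · obtain ⟨z₀, hz₀, -⟩ := near x₀ hx₀ 1 one_pos
    obtain ⟨z₁, hz₁, -⟩ := near x₁ hx₁ 1 one_pos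
    exact (hf.1 (mk_mem_prod hx₀ hz₀) (mk_mem_prod hx₁ hz₁) ha hb hab).1
  refine le_of_forall_pos_le_add fun ε hε => ?_
  obtain ⟨z₀, hz₀, hlt₀⟩ := near x₀ hx₀ ε hε
  obtain ⟨z₁, hz₁, hlt₁⟩ := near x₁ hx₁ ε hε
  have hp₀ : (x₀, z₀) ∈ s ×ˢ C := mk_mem_prod hx₀ hz₀
  have hp₁ : (x₁, z₁) ∈ s ×ˢ C := mk_mem_prod hx₁ hz₁
  have hmem := hf.1 hp₀ hp₁ ha hb hab
  calc g (a • x₀ + b • x₁) ≤ f (a • (x₀, z₀) + b • (x₁, z₁)) := (hg _ hmem.1).1 ⟨_, hmem.2, rfl⟩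
    _ ≤ a * f (x₀, z₀) + b * f (x₁, z₁) := hf.2 hp₀ hp₁ ha hb hab
    _ ≤ a * (g x₀ + ε) + b * (g x₁ + ε) := by gcongr
    _ = a • g x₀ + b • g x₁ + ε := by simp only [smul_eq_mul]; linear_combination ε * hab

/-- Completing the square in `z`. -/
theorem inv_mul_norm_sub_sq_add_inv_mul_norm_sq {H : Type*} [NormedAddCommGroup H]
    [InnerProductSpace ℝ H] {t u : ℝ} (ht : t ≠ 0) (hu : u ≠ 0) (htu : u - t ≠ 0) (x z : H) :
    1 / (2 * t) * ‖x - z‖ ^ 2 + 1 / (2 * (u - t)) * ‖x‖ ^ 2 =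
      1 / (2 * u) * ‖z‖ ^ 2 + (u - t) / (2 * t * u) * ‖z - (u / (u - t)) • x‖ ^ 2 := by
  rw [norm_sub_sq_real, norm_sub_sq_real, real_inner_smul_right, real_inner_comm, norm_smul,
    Real.norm_eq_abs, mul_pow, sq_abs]
  field_simp
  ring

theorem inf_convolution_semiconvex_general {H : Type*} [NormedAddCommGroup H]
    [InnerProductSpace ℝ H] (t u : ℝ) (ht : 0 < t) (htu : t < u)
    (φ : H → ℝ) (C : Set H) (hconv : Convex ℝ C)
    (hsc : ConvexOn ℝ Set.univ (fun x => φ x + 1 / (2 * u) * ‖x‖ ^ 2))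
    (ψ : H → ℝ)
    (hψ : ∀ x : H, IsGLB ((fun z => φ z + 1 / (2 * t) * ‖x - z‖ ^ 2) '' C) (ψ x)) :
    ConvexOn ℝ Set.univ (fun x => ψ x + 1 / (2 * (u - t)) * ‖x‖ ^ 2) := by
  have hu : 0 < u := ht.trans htu
  have hut : 0 < u - t := sub_pos.2 htu
  have hsq : ConvexOn ℝ univ fun p : H × H => ‖p.2 - (u / (u - t)) • p.1‖ ^ 2 :=
    convexOn_univ_norm_sq.comp_linearMap
      (LinearMap.snd ℝ H H - (u / (u - t)) • LinearMap.fst ℝ H H)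
  have hF : ConvexOn ℝ univ fun p : H × H =>
      φ p.2 + 1 / (2 * t) * ‖p.1 - p.2‖ ^ 2 + 1 / (2 * (u - t)) * ‖p.1‖ ^ 2 := by
    refine ((hsc.comp_linearMap (LinearMap.snd ℝ H H)).add
      (hsq.smul (by positivity : 0 ≤ (u - t) / (2 * t * u)))).congr fun p _ => ?_
    simp only [Function.comp_apply, LinearMap.snd_apply, Pi.add_apply, smul_eq_mul, add_assoc,
      inv_mul_norm_sub_sq_add_inv_mul_norm_sq ht.ne' hu.ne' hut.ne']
  refine (hF.subset (subset_univ _) (convex_univ.prod hconv)).of_isGLB_image fun x _ => ?_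
  have := (OrderIso.addRight (1 / (2 * (u - t)) * ‖x‖ ^ 2)).isGLB_image'.2 (hψ x)
  rwa [image_image] at this

theorem inf_convolution_semiconvex {H : Type*} [NormedAddCommGroup H]
    [InnerProductSpace ℝ H] (t u : ℝ) (ht : 0 < t) (htu : t < u)
    (φ : H → ℝ) (C : Set H) (hne : C.Nonempty) (hconv : Convex ℝ C)
    (hbdd : BddBelow (φ '' C))
    (hsc : ConvexOn ℝ Set.univ (fun x => φ x + 1 / (2 * u) * ‖x‖ ^ 2))
    (ψ : H → ℝ)
    (hψ : ∀ x : H, IsGLB ((fun z => φ z + 1 / (2 * t) * ‖x - z‖ ^ 2) '' C) (ψ x)) :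
    ConvexOn ℝ Set.univ (fun x => ψ x + 1 / (2 * (u - t)) * ‖x‖ ^ 2) :=
  inf_convolution_semiconvex_general t u ht htu φ C hconv hsc ψ hψ
end

section
/- Let H be a real inner product space, C ⊆ H a nonempty set contained in the closed ball of radius R, φ : H → ℝ bounded below on C, and t > 0. Then the inf-convolution ψ(x) = inf_{z ∈ C}[φ(z) + (1/(2t))‖x - z‖²] is ((R + R')/t)-Lipschitz on the closed ball of radius R' in H, for every R' > 0. -/
theorem inf_convolution_lipschitz {H : Type*} [NormedAddCommGroup H]
    [InnerProductSpace ℝ H] (R R' t : ℝ) (hR : 0 < R) (hR' : 0 < R') (ht : 0 < t)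
    (C : Set H) (hne : C.Nonempty) (hCR : C ⊆ Metric.closedBall (0 : H) R)
    (φ : H → ℝ) (hbdd : BddBelow (φ '' C))
    (ψ : H → ℝ)
    (hψ : ∀ x : H, IsGLB ((fun z => φ z + 1 / (2 * t) * ‖x - z‖ ^ 2) '' C) (ψ x)) :
    ∀ x ∈ Metric.closedBall (0 : H) R', ∀ x' ∈ Metric.closedBall (0 : H) R',
      |ψ x - ψ x'| ≤ (R + R') / t * ‖x - x'‖ := by
  have key : ∀ x ∈ Metric.closedBall (0 : H) R', ∀ x' ∈ Metric.closedBall (0 : H) R',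
      ψ x - ψ x' ≤ (R + R') / t * ‖x - x'‖ := by
    intro x hx x' hx'
    have hx : ‖x‖ ≤ R' := by simpa using hx
    have hx' : ‖x'‖ ≤ R' := by simpa using hx'
    have hlb : ψ x - (R + R') / t * ‖x - x'‖ ∈
        lowerBounds ((fun z => φ z + 1 / (2 * t) * ‖x' - z‖ ^ 2) '' C) := by
      rintro _ ⟨z, hz, rfl⟩
      have hψx := (hψ x).1 ⟨z, hz, rfl⟩
      simp only at hψx
      have hzR : ‖z‖ ≤ R := by simpa using hCR hz
      have hxz : ‖x - z‖ ≤ R' + R :=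
        le_trans (norm_sub_le _ _) (add_le_add hx hzR)
      have hx'z : ‖x' - z‖ ≤ R' + R :=
        le_trans (norm_sub_le _ _) (add_le_add hx' hzR)
      have htri : ‖x - z‖ ≤ ‖x' - z‖ + ‖x - x'‖ := by
        have : x - z = (x - x') + (x' - z) := by abel
        rw [this]
        calc ‖(x - x') + (x' - z)‖ ≤ ‖x - x'‖ + ‖x' - z‖ := norm_add_le _ _
          _ = ‖x' - z‖ + ‖x - x'‖ := by ring
      have hP : ‖x - z‖ ^ 2 ≤ ‖x' - z‖ ^ 2 + 2 * (R + R') * ‖x - x'‖ := by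
        nlinarith [norm_nonneg (x - z), norm_nonneg (x' - z), norm_nonneg (x - x')]
      have h2t : (0:ℝ) < 2 * t := by linarith
      have : 1 / (2 * t) * ‖x - z‖ ^ 2 ≤
          1 / (2 * t) * ‖x' - z‖ ^ 2 + (R + R') / t * ‖x - x'‖ := by
        have := mul_le_mul_of_nonneg_left hP (le_of_lt (by positivity : (0:ℝ) < 1 / (2 * t)))
        calc 1 / (2 * t) * ‖x - z‖ ^ 2
            ≤ 1 / (2 * t) * (‖x' - z‖ ^ 2 + 2 * (R + R') * ‖x - x'‖) := this
          _ = 1 / (2 * t) * ‖x' - z‖ ^ 2 + (R + R') / t * ‖x - x'‖ := by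
              field_simp
      linarith
    have := (hψ x').2 hlb
    linarith
  intro x hx x' hx'
  rw [abs_sub_le_iff]
  constructor
  · exact key x hx x' hx'
  · have := key x' hx' x hx
    rwa [norm_sub_rev] at this
end

section
/- Let H be a real inner product space; let ω : [0,∞) → [0,∞) be a modulus of continuity (increasing, continuous, ω(0)=0) for φ on a set K of diameter at most D, i.e. |φ(z) - φ(x)| ≤ ω(‖z - x‖) for x, z ∈ K. Then for t > 0 and x ∈ K, 0 ≤ φ(x) - inf_{z ∈ K}[φ(z) + (1/(2t))‖x - z‖²] ≤ ω(√(2t·ω(D))). -/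
theorem inf_convolution_error_bound {H : Type*} [NormedAddCommGroup H]
    [InnerProductSpace ℝ H] (K : Set H) (hne : K.Nonempty) (D : ℝ)
    (hD : ∀ x ∈ K, ∀ z ∈ K, ‖x - z‖ ≤ D)
    (φ : H → ℝ) (ω : ℝ → ℝ) (hmono : Monotone ω) (hcont : Continuous ω)
    (hω0 : ω 0 = 0)
    (hmod : ∀ x ∈ K, ∀ z ∈ K, |φ z - φ x| ≤ ω ‖z - x‖)
    (t : ℝ) (ht : 0 < t) (x : H) (hx : x ∈ K) :
    0 ≤ φ x - sInf ((fun z => φ z + 1 / (2 * t) * ‖x - z‖ ^ 2) '' K) ∧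
      φ x - sInf ((fun z => φ z + 1 / (2 * t) * ‖x - z‖ ^ 2) '' K) ≤
        ω (Real.sqrt (2 * t * ω D)) := by
  set f : H → ℝ := fun z => φ z + 1 / (2 * t) * ‖x - z‖ ^ 2 with hf
  have hD0 : 0 ≤ D := by have := hD x hx x hx; simpa using this
  have hωD : 0 ≤ ω D := hω0 ▸ hmono hD0
  have hωs : 0 ≤ ω (Real.sqrt (2 * t * ω D)) := hω0 ▸ hmono (Real.sqrt_nonneg _)
  have hbdd : BddBelow (f '' K) := by
    refine ⟨φ x - ω D, ?_⟩
    rintro y ⟨z, hz, rfl⟩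
    have h1 := abs_le.mp (hmod x hx z hz)
    have h2 : ω ‖z - x‖ ≤ ω D := hmono (by simpa [norm_sub_rev] using hD x hx z hz)
    have hq : 0 ≤ 1 / (2 * t) * ‖x - z‖ ^ 2 := by positivity
    simp only [f]
    nlinarith [h1.1]
  have h1 : sInf (f '' K) ≤ φ x := by
    have := csInf_le hbdd ⟨x, hx, rfl⟩
    simpa [f] using this
  refine ⟨by linarith, ?_⟩
  have h2 : φ x - ω (Real.sqrt (2 * t * ω D)) ≤ sInf (f '' K) := by
    apply le_csInf (hne.image f)
    rintro y ⟨z, hz, rfl⟩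
    have hmd := abs_le.mp (hmod x hx z hz)
    have hq : 0 ≤ 1 / (2 * t) * ‖x - z‖ ^ 2 := by positivity
    by_cases hcase : ‖x - z‖ ≤ Real.sqrt (2 * t * ω D)
    · have h3 : ω ‖z - x‖ ≤ ω (Real.sqrt (2 * t * ω D)) := hmono (by rwa [norm_sub_rev])
      simp only [f]
      nlinarith [hmd.1]
    · push_neg at hcase
      have hsq : 2 * t * ω D ≤ ‖x - z‖ ^ 2 := by
        have := Real.sq_sqrt (by positivity : (0:ℝ) ≤ 2 * t * ω D)
        nlinarith [Real.sqrt_nonneg (2 * t * ω D), norm_nonneg (x - z)]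
      have h3 : ω D ≤ 1 / (2 * t) * ‖x - z‖ ^ 2 := by
        rw [div_mul_eq_mul_div, le_div_iff₀ (by positivity)]
        linarith
      have h4 : ω ‖z - x‖ ≤ ω D := hmono (by simpa [norm_sub_rev] using hD x hx z hz)
      simp only [f]
      nlinarith [hmd.1]
  linarith
end

section
/- Let n ≥ 1 and let F : (M_n(ℂ)_sa)^m → M_n(ℂ)_sa be a function that is L-Lipschitz with respect to the normalized Hilbert–Schmidt norm ‖a‖₂ = √(tr_n(a*a)) (where tr_n is the normalized trace) and equivariant under unitary conjugation: F(ux₁u*, …, uxₘu*) = uF(x₁,…,xₘ)u* for every unitary u ∈ M_n(ℂ). Then for every tuple (x₁,…,xₘ) of self-adjoint matrices, diam(Spec(F(x₁,…,xₘ))) ≤ L·(∑_{j=1}^m diam(Spec(x_j))²)^{1/2}. -/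
open scoped Matrix

/-- The normalized Hilbert–Schmidt norm `‖a‖₂ = √(tr_n(a* a))` on `n × n`
complex matrices, where `tr_n = (1/n) Tr` is the normalized trace. -/
noncomputable def hsNorm {n : ℕ} (a : Matrix (Fin n) (Fin n) ℂ) : ℝ :=
  Real.sqrt ((Matrix.trace (aᴴ * a)).re / n)

/-!
Let `λ ≥ μ` be the extreme eigenvalues of `a = F x`, with orthonormal eigenvectors `ξ, η`, and let
`u = 2 e e* - 1` be the reflection fixing the line through `e = (ξ - η) / √2`. For self-adjoint `y`,
`‖y - u y u*‖₂² = 8 Var_e(y) / n` with `Var_e(y) = ‖y e‖² - ⟨e, y e⟩²`. For `y = a` this variance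
is `((λ - μ) / 2)²`, while for every `y` it is at most `‖(y - c) e‖² ≤ (diam Spec y / 2)²`, where
`c` is the midpoint of the spectrum. Equivariance gives `F (u x u*) = u a u*`, so the Lipschitz
bound reads `√(2/n) (λ - μ) ≤ L √(2/n) (∑ diam² Spec x_j)^{1/2}`; comparing the constant tuples
`1` and `0` shows `L ≥ 0` whenever `m > 0`, which justifies the monotonicity used on the right.
-/

open Matrix
open scoped InnerProductSpace ComplexOrder

/-- For a unit vector `x` and symmetric `T` this is `‖T x - ⟪x, T x⟫ x‖²`, the variance of `T` in
the state `x`. -/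
noncomputable def stateVariance {𝕜 E : Type*} [RCLike 𝕜] [NormedAddCommGroup E]
    [InnerProductSpace 𝕜 E] (T : E →ₗ[𝕜] E) (x : E) : ℝ :=
  ‖T x‖ ^ 2 - RCLike.re ⟪x, T x⟫_𝕜 ^ 2

section StateVariance

variable {𝕜 E : Type*} [RCLike 𝕜] [NormedAddCommGroup E] [InnerProductSpace 𝕜 E]

theorem stateVariance_le_norm_sub_smul_sq (T : E →ₗ[𝕜] E) {x : E} (hx : ‖x‖ = 1) (c : ℝ) :
    stateVariance T x ≤ ‖T x - (c : 𝕜) • x‖ ^ 2 := by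
  have hre : RCLike.re ⟪T x, (c : 𝕜) • x⟫_𝕜 = c * RCLike.re ⟪x, T x⟫_𝕜 := by
    rw [inner_smul_right, RCLike.re_ofReal_mul, ← inner_conj_symm, RCLike.conj_re]
  rw [stateVariance, @norm_sub_sq 𝕜, hre, norm_smul, RCLike.norm_ofReal, hx]
  nlinarith [sq_nonneg (RCLike.re ⟪x, T x⟫_𝕜 - c), sq_abs c]

theorem LinearMap.IsSymmetric.norm_apply_sub_smul_sq_le {ι : Type*} [Fintype ι]
    {T : E →ₗ[𝕜] E} (hT : T.IsSymmetric) (b : OrthonormalBasis ι 𝕜 E) {μ : ι → ℝ}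
    (hb : ∀ i, T (b i) = (μ i : 𝕜) • b i) {c r : ℝ} (hr : ∀ i, |μ i - c| ≤ r) (x : E) :
    ‖T x - (c : 𝕜) • x‖ ^ 2 ≤ r ^ 2 * ‖x‖ ^ 2 := by
  have hcoord : ∀ i, ⟪b i, T x - (c : 𝕜) • x⟫_𝕜 = ((μ i - c : ℝ) : 𝕜) * ⟪b i, x⟫_𝕜 := by
    intro i
    rw [inner_sub_right, inner_smul_right, ← hT, hb, inner_smul_left, RCLike.conj_ofReal]
    push_cast
    ring
  rw [← b.sum_sq_norm_inner_right, ← b.sum_sq_norm_inner_right, Finset.mul_sum]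
  refine Finset.sum_le_sum fun i _ => ?_
  rw [hcoord, norm_mul, mul_pow, RCLike.norm_ofReal]
  gcongr
  exact hr i

theorem norm_inv_sqrt_two_smul_sub {ξ η : E} (hξ : ‖ξ‖ = 1) (hη : ‖η‖ = 1)
    (hξη : ⟪ξ, η⟫_𝕜 = 0) : ‖(((√2)⁻¹ : ℝ) : 𝕜) • (ξ - η)‖ = 1 := by
  have h2 : ‖ξ - η‖ ^ 2 = 2 := by
    rw [@norm_sub_sq 𝕜, hξ, hη, hξη]
    norm_num
  rw [norm_smul, RCLike.norm_ofReal, abs_inv, abs_of_pos (by positivity),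
    ← Real.sqrt_sq (norm_nonneg (ξ - η)), h2, inv_mul_cancel₀ (by positivity)]

theorem stateVariance_inv_sqrt_two_smul_sub {ξ η : E} (hξ : ‖ξ‖ = 1) (hη : ‖η‖ = 1)
    (hξη : ⟪ξ, η⟫_𝕜 = 0) {T : E →ₗ[𝕜] E} {lam mu : ℝ}
    (hTξ : T ξ = (lam : 𝕜) • ξ) (hTη : T η = (mu : 𝕜) • η) :
    stateVariance T ((((√2)⁻¹ : ℝ) : 𝕜) • (ξ - η)) = ((lam - mu) / 2) ^ 2 := by
  have hηξ : ⟪η, ξ⟫_𝕜 = 0 := inner_eq_zero_symm.mp hξη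
  have hs : ((√2)⁻¹ : ℝ) ^ 2 = 1 / 2 := by rw [inv_pow, Real.sq_sqrt zero_le_two, one_div]
  have hnorm : ‖T ((((√2)⁻¹ : ℝ) : 𝕜) • (ξ - η))‖ ^ 2 = (lam ^ 2 + mu ^ 2) / 2 := by
    rw [map_smul, map_sub, hTξ, hTη, norm_smul, mul_pow, RCLike.norm_ofReal, sq_abs, hs,
      @norm_sub_sq 𝕜, norm_smul, norm_smul, inner_smul_left, inner_smul_right, hξη]
    simp only [one_div, norm_algebraMap', Real.norm_eq_abs, hξ, mul_one, sq_abs,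
      RCLike.conj_ofReal, mul_zero, map_zero, sub_zero, hη]
    ring
  have hinner : RCLike.re ⟪(((√2)⁻¹ : ℝ) : 𝕜) • (ξ - η), T ((((√2)⁻¹ : ℝ) : 𝕜) • (ξ - η))⟫_𝕜 =
      (lam + mu) / 2 := by
    rw [map_smul, map_sub, hTξ, hTη, inner_smul_left, inner_smul_right, RCLike.conj_ofReal,
      ← mul_assoc, ← RCLike.ofReal_mul, ← sq, hs, RCLike.re_ofReal_mul]
    simp only [inner_sub_right, inner_smul_right, inner_sub_left, inner_self_eq_norm_sq_to_K, hξ,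
      hη, hξη, hηξ, map_one, one_pow, sub_zero, zero_sub, mul_one, mul_neg, sub_neg_eq_add,
      map_add, RCLike.ofReal_re]
    ring
  rw [stateVariance, hnorm, hinner]
  ring

end StateVariance

namespace Matrix

section Reflection

variable {ι R : Type*} [Fintype ι] [CommRing R]

theorem isStarProjection_vecMulVec_star [StarRing R] {v : ι → R} (hv : star v ⬝ᵥ v = 1) :
    IsStarProjection (vecMulVec v (star v)) where
  isIdempotentElem := by
    rw [IsIdempotentElem, vecMulVec_mul_vecMulVec, hv, one_smul]
  isSelfAdjoint := by
    rw [IsSelfAdjoint, star_eq_conjTranspose, conjTranspose_vecMulVec, star_star]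

variable [DecidableEq ι]

theorem trace_mul_two_mul_sub_one_mul_two_mul_sub_one (y p : Matrix ι ι R) :
    trace (y * (2 * p - 1) * y * (2 * p - 1)) =
      trace (y * y) - 4 * trace (y * y * p) + 4 * trace (y * p * y * p) := by
  have hexp : y * (2 * p - 1) * y * (2 * p - 1) =
      4 • (y * p * y * p) - 2 • (y * p * y) - 2 • (y * y * p) + y * y := by
    noncomm_ring
  have hcyc : trace (y * p * y) = trace (y * y * p) := by
    rw [trace_mul_comm, ← Matrix.mul_assoc]
  rw [hexp, trace_add, trace_sub, trace_sub, trace_smul, trace_smul, trace_smul, hcyc]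
  simp only [nsmul_eq_mul]
  push_cast
  ring

variable [StarRing R]

theorem trace_conjTranspose_mul_self_sub_mul_mul_of_mul_self_eq_one {y u : Matrix ι ι R}
    (hy : y.IsHermitian) (hu : u.IsHermitian) (huu : u * u = 1) :
    trace ((y - u * y * u)ᴴ * (y - u * y * u)) =
      2 * (trace (y * y) - trace (y * u * y * u)) := by
  have hsa : (y - u * y * u)ᴴ = y - u * y * u := by
    simp only [conjTranspose_sub, conjTranspose_mul, hy.eq, hu.eq, Matrix.mul_assoc]
  have hexp : (y - u * y * u) * (y - u * y * u) =
      y * y - y * u * y * u - u * (y * u * y) + u * y * (u * u) * y * u := by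
    noncomm_ring
  have hcyc : trace (u * (y * u * y)) = trace (y * u * y * u) := by
    rw [trace_mul_comm, Matrix.mul_assoc]
  have hcyc' : trace (u * y * y * u) = trace (y * y) := by
    rw [trace_mul_comm, ← Matrix.mul_assoc, ← Matrix.mul_assoc, huu, Matrix.one_mul]
  rw [hsa, hexp, huu, Matrix.mul_one, trace_add, trace_sub, trace_sub, hcyc, hcyc']
  ring

theorem _root_.IsStarProjection.trace_conjTranspose_mul_self_sub_reflection_conj
    {y p : Matrix ι ι R} (hy : y.IsHermitian) (hp : IsStarProjection p) :
    trace ((y - (2 * p - 1) * y * star (2 * p - 1))ᴴ *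
        (y - (2 * p - 1) * y * star (2 * p - 1))) =
      8 * (trace (y * y * p) - trace (y * p * y * p)) := by
  have hu := Unitary.mem_iff.mp hp.two_mul_sub_one_mem_unitary
  have hsa : star (2 * p - 1) = 2 * p - 1 := by
    simp [two_mul, hp.isSelfAdjoint.star_eq]
  rw [hsa] at hu ⊢
  rw [trace_conjTranspose_mul_self_sub_mul_mul_of_mul_self_eq_one hy hsa hu.1,
    trace_mul_two_mul_sub_one_mul_two_mul_sub_one]
  ring

end Reflection

variable {𝕜 ι : Type*} [RCLike 𝕜] [Fintype ι]

theorem _root_.EuclideanSpace.star_dotProduct_self_eq_one {e : EuclideanSpace 𝕜 ι}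
    (he : ‖e‖ = 1) : star (e : ι → 𝕜) ⬝ᵥ e = 1 := by
  rw [dotProduct_comm, ← EuclideanSpace.inner_eq_star_dotProduct, inner_self_eq_norm_sq_to_K, he]
  simp

variable [DecidableEq ι]

def lineReflection {e : EuclideanSpace 𝕜 ι} (he : ‖e‖ = 1) : unitaryGroup ι 𝕜 :=
  ⟨2 * vecMulVec e (star e) - 1, (isStarProjection_vecMulVec_star
    (EuclideanSpace.star_dotProduct_self_eq_one he)).two_mul_sub_one_mem_unitary⟩

theorem trace_mul_vecMulVec_star (M : Matrix ι ι 𝕜) (e : EuclideanSpace 𝕜 ι) :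
    trace (M * vecMulVec e (star e)) = ⟪e, toEuclideanLin M e⟫_𝕜 := by
  rw [mul_vecMulVec, trace_vecMulVec]
  rfl

theorem IsHermitian.re_trace_sub_eq_stateVariance {y : Matrix ι ι 𝕜} (hy : y.IsHermitian)
    (e : EuclideanSpace 𝕜 ι) :
    RCLike.re (trace (y * y * vecMulVec e (star e)) -
        trace (y * vecMulVec e (star e) * y * vecMulVec e (star e))) =
      stateVariance (toEuclideanLin y) e := by
  have hT := isSymmetric_toEuclideanLin_iff.mpr hy
  have hsq : trace (y * y * vecMulVec e (star e)) = (‖toEuclideanLin y e‖ ^ 2 : 𝕜) := by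
    rw [trace_mul_vecMulVec_star, toLpLin_mul 2 2 2, LinearMap.comp_apply, ← hT,
      inner_self_eq_norm_sq_to_K]
  have hmean : trace (y * vecMulVec e (star e) * y * vecMulVec e (star e)) =
      ⟪e, toEuclideanLin y e⟫_𝕜 ^ 2 := by
    rw [Matrix.mul_assoc, mul_vecMulVec, vecMulVec_mul_vecMulVec, trace_vecMulVec,
      dotProduct_smul, smul_eq_mul, sq, dotProduct_comm (star _)]
    rfl
  have hreal : (RCLike.re ⟪e, toEuclideanLin y e⟫_𝕜 : 𝕜) = ⟪e, toEuclideanLin y e⟫_𝕜 := by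
    simpa only [hT e e] using hT.coe_re_inner_apply_self e
  rw [stateVariance, hsq, hmean, ← hreal]
  norm_cast

theorem IsHermitian.toEuclideanLin_eigenvectorBasis {A : Matrix ι ι 𝕜} (hA : A.IsHermitian)
    (i : ι) :
    toEuclideanLin A (hA.eigenvectorBasis i) = (hA.eigenvalues i : 𝕜) • hA.eigenvectorBasis i := by
  ext k
  change (A *ᵥ ⇑(hA.eigenvectorBasis i)) k = _
  rw [hA.mulVec_eigenvectorBasis i]
  simp [RCLike.real_smul_eq_coe_mul]

theorem IsHermitian.exists_diam_spectrum_eq [Nonempty ι] {A : Matrix ι ι 𝕜}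
    (hA : A.IsHermitian) :
    ∃ i j, (∀ k, hA.eigenvalues j ≤ hA.eigenvalues k ∧ hA.eigenvalues k ≤ hA.eigenvalues i) ∧
      Metric.diam (spectrum 𝕜 A) = hA.eigenvalues i - hA.eigenvalues j := by
  obtain ⟨i, hi⟩ := Finite.exists_max hA.eigenvalues
  obtain ⟨j, hj⟩ := Finite.exists_min hA.eigenvalues
  refine ⟨i, j, fun k => ⟨hj k, hi k⟩, ?_⟩
  rw [hA.spectrum_eq_image_range, ← RCLike.ofRealLI_apply, RCLike.ofRealLI.isometry.diam_image]
  apply le_antisymm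
  · refine Metric.diam_le_of_forall_dist_le (by linarith [hi j]) ?_
    rintro _ ⟨k, rfl⟩ _ ⟨l, rfl⟩
    rw [Real.dist_eq, abs_le]
    constructor <;> linarith [hi k, hi l, hj k, hj l]
  · have h := Metric.dist_le_diam_of_mem (Set.finite_range hA.eigenvalues).isBounded
      (Set.mem_range_self i) (Set.mem_range_self j)
    rwa [Real.dist_eq, abs_of_nonneg (by linarith [hj i])] at h

theorem IsHermitian.stateVariance_le_diam_spectrum [Nonempty ι] {A : Matrix ι ι 𝕜}
    (hA : A.IsHermitian) {e : EuclideanSpace 𝕜 ι} (he : ‖e‖ = 1) :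
    stateVariance (toEuclideanLin A) e ≤ (Metric.diam (spectrum 𝕜 A) / 2) ^ 2 := by
  obtain ⟨i, j, hbounds, hdiam⟩ := hA.exists_diam_spectrum_eq
  have hr : ∀ k, |hA.eigenvalues k - (hA.eigenvalues i + hA.eigenvalues j) / 2| ≤
      (hA.eigenvalues i - hA.eigenvalues j) / 2 := fun k => by
    rw [abs_le]
    constructor <;> linarith [hbounds k]
  calc stateVariance (toEuclideanLin A) e
      ≤ ‖toEuclideanLin A e - (((hA.eigenvalues i + hA.eigenvalues j) / 2 : ℝ) : 𝕜) • e‖ ^ 2 :=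
        stateVariance_le_norm_sub_smul_sq _ he _
    _ ≤ ((hA.eigenvalues i - hA.eigenvalues j) / 2) ^ 2 * ‖e‖ ^ 2 :=
        (isSymmetric_toEuclideanLin_iff.mpr hA).norm_apply_sub_smul_sq_le hA.eigenvectorBasis
          hA.toEuclideanLin_eigenvectorBasis hr e
    _ = (Metric.diam (spectrum 𝕜 A) / 2) ^ 2 := by rw [he, hdiam, one_pow, mul_one]

end Matrix

theorem hsNorm_sq {n : ℕ} (a : Matrix (Fin n) (Fin n) ℂ) :
    hsNorm a ^ 2 = (trace (aᴴ * a)).re / n := by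
  have h := (posSemidef_conjTranspose_mul_self a).trace_nonneg
  rw [hsNorm, Real.sq_sqrt (div_nonneg (Complex.nonneg_iff.mp h).1 n.cast_nonneg)]

theorem hsNorm_nonneg {n : ℕ} (a : Matrix (Fin n) (Fin n) ℂ) : 0 ≤ hsNorm a :=
  Real.sqrt_nonneg _

theorem hsNorm_one {n : ℕ} (hn : n ≠ 0) : hsNorm (1 : Matrix (Fin n) (Fin n) ℂ) = 1 := by
  simp [hsNorm, hn]

theorem hsNorm_sub_lineReflection_conj_sq {n : ℕ} {y : Matrix (Fin n) (Fin n) ℂ}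
    (hy : y.IsHermitian) {e : EuclideanSpace ℂ (Fin n)} (he : ‖e‖ = 1) :
    hsNorm (y - (lineReflection he : Matrix (Fin n) (Fin n) ℂ) * y *
        star (lineReflection he : Matrix (Fin n) (Fin n) ℂ)) ^ 2 =
      8 * stateVariance (toEuclideanLin y) e / n := by
  have hp := isStarProjection_vecMulVec_star (EuclideanSpace.star_dotProduct_self_eq_one he)
  rw [hsNorm_sq, lineReflection, hp.trace_conjTranspose_mul_self_sub_reflection_conj hy,
    ← hy.re_trace_sub_eq_stateVariance]
  simp

theorem hsNorm_sub_lineReflection_conj_le {n : ℕ} [Nonempty (Fin n)]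
    {y : Matrix (Fin n) (Fin n) ℂ} (hy : y.IsHermitian) {e : EuclideanSpace ℂ (Fin n)}
    (he : ‖e‖ = 1) :
    hsNorm (y - (lineReflection he : Matrix (Fin n) (Fin n) ℂ) * y *
        star (lineReflection he : Matrix (Fin n) (Fin n) ℂ)) ≤
      √(2 / n) * Metric.diam (spectrum ℂ y) := by
  rw [← Real.sqrt_sq (hsNorm_nonneg _), hsNorm_sub_lineReflection_conj_sq hy he,
    ← Real.sqrt_sq (Metric.diam_nonneg (s := spectrum ℂ y)), ← Real.sqrt_mul (by positivity)]
  refine Real.sqrt_le_sqrt ?_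
  calc 8 * stateVariance (toEuclideanLin y) e / n
      ≤ 8 * (Metric.diam (spectrum ℂ y) / 2) ^ 2 / n := by
        gcongr
        exact hy.stateVariance_le_diam_spectrum he
    _ = 2 / n * Metric.diam (spectrum ℂ y) ^ 2 := by ring

theorem hsNorm_sub_lineReflection_conj_of_eigenvectors {n : ℕ} {a : Matrix (Fin n) (Fin n) ℂ}
    (ha : a.IsHermitian) {ξ η : EuclideanSpace ℂ (Fin n)} (hξ : ‖ξ‖ = 1) (hη : ‖η‖ = 1)
    (hξη : ⟪ξ, η⟫_ℂ = 0) {lam mu : ℝ} (hmu : mu ≤ lam)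
    (haξ : toEuclideanLin a ξ = (lam : ℂ) • ξ) (haη : toEuclideanLin a η = (mu : ℂ) • η) :
    hsNorm (a -
        (lineReflection (norm_inv_sqrt_two_smul_sub hξ hη hξη) : Matrix (Fin n) (Fin n) ℂ) * a *
          star (lineReflection (norm_inv_sqrt_two_smul_sub hξ hη hξη) :
            Matrix (Fin n) (Fin n) ℂ)) =
      √(2 / n) * (lam - mu) := by
  rw [← Real.sqrt_sq (hsNorm_nonneg _), hsNorm_sub_lineReflection_conj_sq ha,
    stateVariance_inv_sqrt_two_smul_sub hξ hη hξη haξ haη,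
    show 8 * ((lam - mu) / 2) ^ 2 / n = 2 / n * (lam - mu) ^ 2 by ring,
    Real.sqrt_mul (by positivity), Real.sqrt_sq (sub_nonneg.mpr hmu)]

theorem nonneg_of_hsNorm_lipschitz {n m : ℕ} (hn : n ≠ 0) [Nonempty (Fin m)] {L : ℝ}
    {F : (Fin m → Matrix (Fin n) (Fin n) ℂ) → Matrix (Fin n) (Fin n) ℂ}
    (hLip : ∀ x y : Fin m → Matrix (Fin n) (Fin n) ℂ,
      (∀ j, (x j).IsHermitian) → (∀ j, (y j).IsHermitian) →
      hsNorm (F x - F y) ≤ L * √(∑ j, hsNorm (x j - y j) ^ 2)) :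
    0 ≤ L := by
  have h := hLip 1 0 (fun _ => isHermitian_one) (fun _ => isHermitian_zero)
  simp only [Pi.one_apply, Pi.zero_apply, sub_zero, hsNorm_one hn, one_pow, Finset.sum_const,
    Finset.card_univ, Fintype.card_fin, nsmul_eq_mul, mul_one] at h
  have hm : 0 < √(m : ℝ) := Real.sqrt_pos.mpr (Nat.cast_pos.mpr Fin.pos')
  exact nonneg_of_mul_nonneg_left ((Real.sqrt_nonneg _).trans h) hm

theorem mul_sqrt_sum_sq_le_of_le_mul {ι : Type*} [Fintype ι] {L s : ℝ}
    (hL : Nonempty ι → 0 ≤ L) (hs : 0 ≤ s) {c d : ι → ℝ} (hc : ∀ i, 0 ≤ c i)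
    (hcd : ∀ i, c i ≤ s * d i) : L * √(∑ i, c i ^ 2) ≤ s * (L * √(∑ i, d i ^ 2)) := by
  cases isEmpty_or_nonempty ι
  · simp
  have hsq : ∀ i, c i ^ 2 ≤ s ^ 2 * d i ^ 2 := fun i => by
    rw [← mul_pow]
    exact pow_le_pow_left₀ (hc i) (hcd i) 2
  calc L * √(∑ i, c i ^ 2) ≤ L * √(∑ i, s ^ 2 * d i ^ 2) :=
        mul_le_mul_of_nonneg_left (Real.sqrt_le_sqrt (Finset.sum_le_sum fun i _ => hsq i))
          (hL ‹_›)
    _ = s * (L * √(∑ i, d i ^ 2)) := by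
        rw [← Finset.mul_sum, Real.sqrt_mul (sq_nonneg s), Real.sqrt_sq hs]
        ring

theorem spectral_diameter_bound (n m : ℕ) (hn : 1 ≤ n) (L : ℝ)
    (F : (Fin m → Matrix (Fin n) (Fin n) ℂ) → Matrix (Fin n) (Fin n) ℂ)
    (hFsa : ∀ x : Fin m → Matrix (Fin n) (Fin n) ℂ,
      (∀ j, (x j).IsHermitian) → (F x).IsHermitian)
    (hLip : ∀ x y : Fin m → Matrix (Fin n) (Fin n) ℂ,
      (∀ j, (x j).IsHermitian) → (∀ j, (y j).IsHermitian) →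
      hsNorm (F x - F y) ≤ L * Real.sqrt (∑ j, hsNorm (x j - y j) ^ 2))
    (hEquiv : ∀ x : Fin m → Matrix (Fin n) (Fin n) ℂ,
      (∀ j, (x j).IsHermitian) → ∀ u : Matrix.unitaryGroup (Fin n) ℂ,
      F (fun j => (u : Matrix (Fin n) (Fin n) ℂ) * x j *
          star (u : Matrix (Fin n) (Fin n) ℂ)) =
        (u : Matrix (Fin n) (Fin n) ℂ) * F x *
          star (u : Matrix (Fin n) (Fin n) ℂ))
    (x : Fin m → Matrix (Fin n) (Fin n) ℂ) (hx : ∀ j, (x j).IsHermitian) :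
    Metric.diam (spectrum ℂ (F x)) ≤
      L * Real.sqrt (∑ j, Metric.diam (spectrum ℂ (x j)) ^ 2) := by
  have : Nonempty (Fin n) := ⟨⟨0, hn⟩⟩
  have hL : Nonempty (Fin m) → 0 ≤ L := fun _ => nonneg_of_hsNorm_lipschitz (by omega) hLip
  have ha := hFsa x hx
  obtain ⟨i, j, hbounds, hdiam⟩ := ha.exists_diam_spectrum_eq
  rw [hdiam]
  rcases eq_or_ne i j with rfl | hij
  · simpa using mul_sqrt_sum_sq_le_of_le_mul hL zero_le_one (c := 0) (fun _ => le_rfl)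
      fun k => by simp [Metric.diam_nonneg]
  set b := ha.eigenvectorBasis
  have hξη : ⟪b i, b j⟫_ℂ = 0 := b.orthonormal.2 hij
  set U := lineReflection (norm_inv_sqrt_two_smul_sub (b.norm_eq_one i) (b.norm_eq_one j) hξη)
  set u : Matrix (Fin n) (Fin n) ℂ := ↑U
  refine le_of_mul_le_mul_left ?_ (by positivity : 0 < √(2 / n : ℝ))
  calc √(2 / n) * (ha.eigenvalues i - ha.eigenvalues j)
      = hsNorm (F x - F fun k => u * x k * star u) := by
        rw [hEquiv x hx U, hsNorm_sub_lineReflection_conj_of_eigenvectors ha (b.norm_eq_one i)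
          (b.norm_eq_one j) hξη (hbounds i).1 (ha.toEuclideanLin_eigenvectorBasis i)
          (ha.toEuclideanLin_eigenvectorBasis j)]
    _ ≤ L * √(∑ k, hsNorm (x k - u * x k * star u) ^ 2) :=
        hLip x _ hx fun k => ((hx k).isSelfAdjoint.conjugate _).isHermitian
    _ ≤ √(2 / n) * (L * √(∑ k, Metric.diam (spectrum ℂ (x k)) ^ 2)) :=
        mul_sqrt_sum_sq_le_of_le_mul hL (Real.sqrt_nonneg _) (fun k => hsNorm_nonneg _)
          fun k => hsNorm_sub_lineReflection_conj_le (hx k) _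
end
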